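/- If every right R-module is co-Kasch, then R is a right max-ring, i.e., every nonzero right R-module has a maximal submodule. -/
import Mathlib

def IsCoKasch (R : Type*) [Ring R] (M : Type*) [AddCommGroup M] [Module R M] : Prop :=
  ∀ (K : Submodule R M) (S : Submodule R (M ⧸ K)), IsSimpleModule R S →
    ∃ f : M →ₗ[R] S, Function.Surjective f

/-- If every module is co-Kasch, then `R` is a max-ring:
every nonzero module has a maximal submodule. -/
theorem stmt9 (R : Type u) [Ring R]
    (h : ∀ (M : Type u) [AddCommGroup M] [Module R M], IsCoKasch R M) :
    ∀ (M : Type u) [AddCommGroup M] [Module R M], Nontrivial M →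
      ∃ N : Submodule R M, IsCoatom N := by
  intro M _ _ _
  obtain ⟨x, hx⟩ := exists_ne (0 : M)
  -- Zorn: maximal submodule K with x ∉ K
  obtain ⟨K, -, hKmax⟩ := zorn_le_nonempty₀ {K : Submodule R M | x ∉ K}
    (fun c hcs hc y hy => by
      refine ⟨sSup c, ?_, fun z hz => le_sSup hz⟩
      intro hxc
      obtain ⟨z, hzc, hxz⟩ := (Submodule.mem_sSup_of_directed ⟨y, hy⟩
        hc.directedOn).mp hxc
      exact hcs hzc hxz)
    ⊥ (by simpa using hx)
  have hxK : x ∉ K := hKmax.prop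
  -- the span of (mk x) in M ⧸ K is an atom
  set S : Submodule R (M ⧸ K) := Submodule.span R {Submodule.Quotient.mk x} with hS
  have hmkx : (Submodule.Quotient.mk x : M ⧸ K) ≠ 0 := by
    simpa [Submodule.Quotient.mk_eq_zero] using hxK
  have hatom : IsAtom S := by
    constructor
    · intro hbot
      apply hmkx
      have : (Submodule.Quotient.mk x : M ⧸ K) ∈ S := Submodule.mem_span_singleton_self _
      rw [hbot] at this
      simpa using this
    · intro T hT
      by_contra hTbot
      have hKle : K ≤ T.comap K.mkQ := by
        intro k hk
        simp [Submodule.mem_comap, (Submodule.Quotient.mk_eq_zero K).2 hk]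
      have hne : K ≠ T.comap K.mkQ := by
        intro heq
        apply hTbot
        rw [eq_bot_iff]
        intro t ht
        obtain ⟨m, rfl⟩ := K.mkQ_surjective t
        have hm : m ∈ T.comap K.mkQ := ht
        rw [← heq] at hm
        simpa [Submodule.mkQ_apply, Submodule.Quotient.mk_eq_zero] using hm
      -- maximality: x ∈ comap mkQ T
      have hxT : x ∈ T.comap K.mkQ := by
        by_contra hxT
        exact hne (le_antisymm hKle (hKmax.le_of_ge hxT hKle))
      have hST : S ≤ T := by
        rw [hS, Submodule.span_le, Set.singleton_subset_iff]
        exact hxT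
      exact absurd hST (not_le_of_gt hT)
  have hsimple : IsSimpleModule R S := isSimpleModule_iff_isAtom.mpr hatom
  obtain ⟨f, hf⟩ := h M K S hsimple
  refine ⟨LinearMap.ker f, ?_⟩
  rw [← isSimpleModule_iff_isCoatom]
  exact IsSimpleModule.congr (f.quotKerEquivOfSurjective hf)
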